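/- arXiv:1208.2164 — 3 statements merged into one kernel-verified Lean document; each statement's English description precedes it below -/
import Mathlib

section
/- For every positive even integer a, there exists a balanced bipartite digraph D' with colour classes of cardinality a such that every vertex of D' has degree exactly 3a/2 (so δ(D') = 3a/2) and D' contains no hamiltonian cycle. Specifically, let X = R ∪ S and Y = U ∪ W be disjoint unions with |R| = |S| = |U| = |W| = a/2, and let the arcs be: ry for all r ∈ R, y ∈ Y; ux for all u ∈ U, x ∈ X; and both sw and ws for all s ∈ S, w ∈ W. Then this digraph has the stated properties. -/
namespace BipDigraph

variable {V : Type}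

/-- Out-degree of `v` in the digraph `(V, A)`. -/
noncomputable def outdeg (A : V → V → Prop) (v : V) : ℕ := Nat.card {w : V // A v w}

/-- In-degree of `v` in the digraph `(V, A)`. -/
noncomputable def indeg (A : V → V → Prop) (v : V) : ℕ := Nat.card {w : V // A w v}

/-- Degree of `v`: out-degree plus in-degree. -/
noncomputable def deg (A : V → V → Prop) (v : V) : ℕ := outdeg A v + indeg A v

/-- Out-degree of `v` relative to the vertex set `S`. -/
noncomputable def outdegIn (A : V → V → Prop) (S : Set V) (v : V) : ℕ := Nat.card {w : V // w ∈ S ∧ A v w}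

/-- In-degree of `v` relative to the vertex set `S`. -/
noncomputable def indegIn (A : V → V → Prop) (S : Set V) (v : V) : ℕ := Nat.card {w : V // w ∈ S ∧ A w v}

/-- Degree of `v` relative to the vertex set `S`. -/
noncomputable def degIn (A : V → V → Prop) (S : Set V) (v : V) : ℕ := outdegIn A S v + indegIn A S v

/-- The arc `(u,v)` belongs to the matching given by the function `M` on the class `X`. -/
def InM (X : Finset V) (M : V → V) (u v : V) : Prop := u ∈ X ∧ M u = v

/-- The arc `(u,v)` is an arc of the digraph not belonging to the matching. -/
def NotM (A : V → V → Prop) (X : Finset V) (M : V → V) (u v : V) : Prop :=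
  A u v ∧ ¬ InM X M u v

/-- `M` is a complete matching from `X` to `Y`: every `x ∈ X` is matched along an arc
to a vertex of `Y`, and the matching arcs are independent. -/
def CompleteMatching (A : V → V → Prop) (X Y : Finset V) (M : V → V) : Prop :=
  (∀ x ∈ X, M x ∈ Y ∧ A x (M x)) ∧ Set.InjOn M X

/-- Consecutive arcs of the list alternately satisfy `P` and `Q`, starting with `P`. -/
def Alt (P Q : V → V → Prop) : List V → Prop
  | [] => True
  | [_] => True
  | a :: b :: t => P a b ∧ Alt Q P (b :: t)

/-- `p` is an oriented path in `(V, A)` whose arcs are alternately in the matching `M`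
(on `X`) and outside of it. -/
def IsCompatPath (A : V → V → Prop) (X : Finset V) (M : V → V) (p : List V) : Prop :=
  p ≠ [] ∧ p.Nodup ∧ p.Chain' A ∧
    (Alt (InM X M) (NotM A X M) p ∨ Alt (NotM A X M) (InM X M) p)

/-- An `M`-compatible oriented path from `u` to `v`. -/
def IsCompatPathFromTo (A : V → V → Prop) (X : Finset V) (M : V → V)
    (p : List V) (u v : V) : Prop :=
  IsCompatPath A X M p ∧ p.head? = some u ∧ p.getLast? = some v

/-- `p` lists the vertices of an oriented cycle of `(V, A)` in cyclic order;
its length (number of arcs = number of vertices) is `p.length`. -/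
def IsCycle (A : V → V → Prop) (p : List V) : Prop :=
  2 ≤ p.length ∧ p.Nodup ∧ ∃ u, p.head? = some u ∧ List.Chain' A (p ++ [u])

/-- `p` is an oriented cycle whose arcs are alternately in the matching `M` (on `X`)
and outside of it. -/
def IsCompatCycle (A : V → V → Prop) (X : Finset V) (M : V → V) (p : List V) : Prop :=
  2 ≤ p.length ∧ p.Nodup ∧ ∃ u, p.head? = some u ∧ List.Chain' A (p ++ [u]) ∧
    (Alt (InM X M) (NotM A X M) (p ++ [u]) ∨ Alt (NotM A X M) (InM X M) (p ++ [u]))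

/-- The digraph `(V, A)` contains an oriented cycle of length `n`. -/
def HasCycleOfLength (A : V → V → Prop) (n : ℕ) : Prop :=
  ∃ p : List V, IsCycle A p ∧ p.length = n

/-- `(V, A)` is a balanced bipartite digraph with colour classes `X`, `Y` of cardinality `a`. -/
def BalancedBipartite (A : V → V → Prop) (X Y : Finset V) (a : ℕ) : Prop :=
  X.card = a ∧ Y.card = a ∧ Disjoint X Y ∧ (∀ v : V, v ∈ X ∨ v ∈ Y) ∧
    ∀ u v : V, A u v → (u ∈ X ∧ v ∈ Y) ∨ (u ∈ Y ∧ v ∈ X)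

/-- Condition (M): `d(u) + d(v) ≥ 3a + 1` for every pair of distinct vertices `u, v`
with no arc between them in either direction. -/
def CondM (A : V → V → Prop) (a : ℕ) : Prop :=
  ∀ u v : V, u ≠ v → ¬ A u v → ¬ A v u → 3 * a + 1 ≤ deg A u + deg A v

/-- Condition (A): `d(x') + d(y') + d(x'') + d(y'') ≥ 6a + 2` for all pairwise distinct
`x', x'' ∈ X`, `y', y'' ∈ Y` joined by `M`-compatible paths from `x'` to `y'` and from
`x''` to `y''`. -/
def CondA (A : V → V → Prop) (X Y : Finset V) (M : V → V) (a : ℕ) : Prop :=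
  ∀ x' x'' y' y'' : V, x' ∈ X → x'' ∈ X → y' ∈ Y → y'' ∈ Y → x' ≠ x'' → y' ≠ y'' →
    (∃ p, IsCompatPathFromTo A X M p x' y') → (∃ p, IsCompatPathFromTo A X M p x'' y'') →
    6 * a + 2 ≤ deg A x' + deg A y' + deg A x'' + deg A y''

/-- An `M`-compatible cycle all of whose vertices lie in `S`. -/
def IsCompatCycleIn (A : V → V → Prop) (X : Finset V) (M : V → V) (S : Set V)
    (p : List V) : Prop :=
  IsCompatCycle A X M p ∧ ∀ v ∈ p, v ∈ S

/-- An `M`-compatible path from `u` to `v` all of whose vertices lie in `S`. -/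
def IsCompatPathFromToIn (A : V → V → Prop) (X : Finset V) (M : V → V) (S : Set V)
    (p : List V) (u v : V) : Prop :=
  IsCompatPathFromTo A X M p u v ∧ ∀ w ∈ p, w ∈ S

/-- The digraph `(V, A)` is strongly connected. -/
def StronglyConnected (A : V → V → Prop) : Prop :=
  ∀ u v : V, u ≠ v →
    ∃ p : List V, p.Chain' A ∧ p.head? = some u ∧ p.getLast? = some v


lemma ncard_of_eq (s : Set V) (t : Finset V) (h : s = ↑t) :
    Nat.card s = t.card := by
  rw [h, Nat.card_coe_set_eq, Set.ncard_coe_finset]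

lemma chain_head_closed {A : V → V → Prop} {C : V → Prop}
    (hC : ∀ u v, A u v → C u → C v) :
    ∀ l : List V, l.Chain' A → (∀ x, l.head? = some x → C x) → ∀ v ∈ l, C v
  | [], _, _, v, hv => by simp at hv
  | a :: t, hch, hh, v, hv => by
    have ha : C a := hh a rfl
    rcases List.mem_cons.mp hv with rfl | hv
    · exact ha
    · match t, hch with
      | b :: t', hch =>
        obtain ⟨h1, h2⟩ := List.isChain_cons_cons.mp hch
        exact chain_head_closed hC (b :: t') h2
          (fun x hx => by simp at hx; exact hx ▸ hC a b h1 ha) v hv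

lemma chain_last_closed {A : V → V → Prop} {C : V → Prop}
    (hC : ∀ u v, A u v → C u → C v) :
    ∀ l : List V, l.Chain' A → ∀ s ∈ l, C s → ∀ x, l.getLast? = some x → C x
  | [], _, s, hs, _, _, _ => by simp at hs
  | [a], _, s, hs, hcs, x, hx => by
    simp at hs hx; subst hs; subst hx; exact hcs
  | a :: b :: t, hch, s, hs, hcs, x, hx => by
    obtain ⟨h1, h2⟩ := List.isChain_cons_cons.mp hch
    have hx' : (b :: t).getLast? = some x := by simpa using hx
    rcases List.mem_cons.mp hs with rfl | hs
    · exact chain_last_closed hC (b :: t) h2 b (by simp) (hC s b h1 hcs) x hx'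
    · exact chain_last_closed hC (b :: t) h2 s hs hcs x hx'

lemma deg_eq_of_finsets {A : V → V → Prop} {v : V} (o i : Finset V)
    (ho : ∀ w, A v w ↔ w ∈ o) (hi : ∀ w, A w v ↔ w ∈ i) :
    deg A v = o.card + i.card := by
  unfold deg outdeg indeg
  have h1 : Nat.card {w : V // A v w} = o.card :=
    ncard_of_eq {w | A v w} o (by ext w; simp [ho w])
  have h2 : Nat.card {w : V // A w v} = i.card :=
    ncard_of_eq {w | A w v} i (by ext w; simp [hi w])
  omega

/-- sharpness of the minimum-degree bound.  For `a = 2b` positive and even,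
the digraph with classes `X = R ∪ S`, `Y = U ∪ W` (`|R| = |S| = |U| = |W| = a/2 = b`) and
arcs `ry` (`r ∈ R`, `y ∈ Y`), `ux` (`u ∈ U`, `x ∈ X`), `sw` and `ws` (`s ∈ S`, `w ∈ W`)
has every vertex of degree exactly `3a/2 = 3b` and contains no hamiltonian cycle. -/
theorem stmt10 (b : ℕ) (hb : 0 < b) {V : Type} [Fintype V] [DecidableEq V]
    (R S U W : Finset V)
    (hR : R.card = b) (hS : S.card = b) (hU : U.card = b) (hW : W.card = b)
    (hRS : Disjoint R S) (hUW : Disjoint U W) (hXY : Disjoint (R ∪ S) (U ∪ W))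
    (hcover : ∀ v : V, v ∈ R ∪ S ∪ U ∪ W)
    (A : V → V → Prop)
    (hA : ∀ u v : V, A u v ↔
      (u ∈ R ∧ (v ∈ U ∨ v ∈ W)) ∨ (u ∈ U ∧ (v ∈ R ∨ v ∈ S)) ∨
      (u ∈ S ∧ v ∈ W) ∨ (u ∈ W ∧ v ∈ S)) :
    (∀ v : V, deg A v = 3 * b) ∧ ¬ HasCycleOfLength A (2 * (2 * b)) := by
  have hd : ∀ v : V, (v ∈ R → v ∉ S ∧ v ∉ U ∧ v ∉ W) ∧ (v ∈ S → v ∉ R ∧ v ∉ U ∧ v ∉ W)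
      ∧ (v ∈ U → v ∉ R ∧ v ∉ S ∧ v ∉ W) ∧ (v ∈ W → v ∉ R ∧ v ∉ S ∧ v ∉ U) := by
    intro v
    have h1 : v ∈ R → v ∉ S := fun hx => Finset.disjoint_left.mp hRS hx
    have h2 : v ∈ U → v ∉ W := fun hx => Finset.disjoint_left.mp hUW hx
    have h3 : v ∈ R ∨ v ∈ S → ¬(v ∈ U ∨ v ∈ W) := fun hx => by
      simpa using Finset.disjoint_left.mp hXY (Finset.mem_union.mpr hx)
    tauto
  constructor
  · intro v
    have hv := hcover v
    simp only [Finset.mem_union] at hv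
    obtain ⟨d1, d2, d3, d4⟩ := hd v
    rcases hv with ((hv | hv) | hv) | hv
    · obtain ⟨n1, n2, n3⟩ := d1 hv
      rw [deg_eq_of_finsets (U ∪ W) U (fun w => by simp [hA, hv, n1, n2, n3])
          (fun w => by simp [hA, hv, n1, n2, n3])]
      rw [Finset.card_union_of_disjoint hUW]; omega
    · obtain ⟨n1, n2, n3⟩ := d2 hv
      rw [deg_eq_of_finsets W (U ∪ W) (fun w => by simp [hA, hv, n1, n2, n3])
          (fun w => by simp [hA, hv, n1, n2, n3])]
      rw [Finset.card_union_of_disjoint hUW]; omega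
    · obtain ⟨n1, n2, n3⟩ := d3 hv
      rw [deg_eq_of_finsets (R ∪ S) R (fun w => by simp [hA, hv, n1, n2, n3])
          (fun w => by simp [hA, hv, n1, n2, n3])]
      rw [Finset.card_union_of_disjoint hRS]; omega
    · obtain ⟨n1, n2, n3⟩ := d4 hv
      rw [deg_eq_of_finsets S (R ∪ S) (fun w => by simp [hA, hv, n1, n2, n3])
          (fun w => by simp [hA, hv, n1, n2, n3])]
      rw [Finset.card_union_of_disjoint hRS]; omega
  · rintro ⟨p, ⟨h2len, hnd, u, hhead, hchain⟩, hlen⟩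
    have hcardV : Fintype.card V = 4 * b := by
      have huniv : R ∪ S ∪ U ∪ W = Finset.univ := Finset.eq_univ_iff_forall.mpr hcover
      rw [← Finset.card_univ, ← huniv, Finset.union_assoc,
        Finset.card_union_of_disjoint hXY, Finset.card_union_of_disjoint hRS,
        Finset.card_union_of_disjoint hUW]
      omega
    have hall : ∀ v : V, v ∈ p := by
      have htf : p.toFinset = Finset.univ := by
        apply Finset.eq_univ_of_card
        rw [List.toFinset_card_of_nodup hnd, hlen, hcardV]; omega
      intro v; rw [← List.mem_toFinset, htf]; exact Finset.mem_univ v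
    have hclosed : ∀ x y, A x y → (x ∈ S ∨ x ∈ W) → (y ∈ S ∨ y ∈ W) := by
      intro x y hxy hx
      rw [hA] at hxy
      obtain ⟨d1x, d2x, d3x, d4x⟩ := hd x
      tauto
    obtain ⟨s, hs⟩ := Finset.card_pos.mp (by rw [hS]; exact hb)
    obtain ⟨r, hr⟩ := Finset.card_pos.mp (by rw [hR]; exact hb)
    have hCu : u ∈ S ∨ u ∈ W :=
      chain_last_closed hclosed (p ++ [u]) hchain s (List.mem_append_left _ (hall s))
        (Or.inl hs) u (by simp)
    have hchp : p.Chain' A := (List.isChain_append.mp hchain).1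
    have hCr : r ∈ S ∨ r ∈ W :=
      chain_head_closed hclosed p hchp
        (fun x hx => by rw [hhead] at hx; injection hx with h; exact h ▸ hCu) r (hall r)
    obtain ⟨n1, n2, n3⟩ := (hd r).1 hr
    tauto

end BipDigraph
end

section
/- For integers a ≥ 2 and 1 ≤ k < a/2, the digraph D(a,k) defined as follows is strongly connected, has minimum degree δ(D(a,k)) = a + k, and contains no hamiltonian cycle: colour classes X = R ∪ S and Y = U ∪ W with |R| = |U| = k, |S| = |W| = a − k, and arcs: ry and yr for all r ∈ R, y ∈ Y; ux and xu for all u ∈ U, x ∈ X; and sw for all s ∈ S, w ∈ W. -/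
namespace BipDigraph

variable {V : Type}

/-! A vertex `r ∈ R` is a hub: every vertex of `Y` is joined to `r` in both directions, and
every vertex of `X` reaches `r` and is reached from it through a vertex of `U`. Every vertex
of `X` sends arcs to all of `Y` and receives arcs from all of `U`, every vertex of `Y` receives
arcs from all of `X` and sends arcs to all of `R`, so all degrees are at least `a + k`, with
equality on `S`. The only out-neighbours of a vertex of `W` lie in `R`, and a hamiltonian cycle
leaves the `a - k` vertices of `W` along arcs with pairwise distinct heads, which is impossible
as `|R| = k < a - k`. -/

section Degree

variable {A : V → V → Prop} {v : V} {T : Finset V}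

theorem card_le_outdeg [Finite V] (h : ∀ w ∈ T, A v w) : T.card ≤ outdeg A v := by
  rw [← Nat.card_eq_finsetCard]
  exact Nat.card_mono (Set.toFinite _) h

theorem outdeg_le_card (h : ∀ w, A v w → w ∈ T) : outdeg A v ≤ T.card := by
  rw [← Nat.card_eq_finsetCard]
  exact Nat.card_mono T.finite_toSet h

theorem card_le_indeg [Finite V] (h : ∀ w ∈ T, A w v) : T.card ≤ indeg A v :=
  card_le_outdeg (A := flip A) h

theorem indeg_le_card (h : ∀ w, A w v → w ∈ T) : indeg A v ≤ T.card :=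
  outdeg_le_card (A := flip A) h

end Degree

theorem stronglyConnected_of_hub {A : V → V → Prop} (c : V)
    (hto : ∀ v, Relation.ReflTransGen A v c) (hfrom : ∀ v, Relation.ReflTransGen A c v) :
    StronglyConnected A := by
  intro u v _
  obtain ⟨l, hl, hlast⟩ :=
    List.exists_isChain_cons_of_relationReflTransGen ((hto u).trans (hfrom v))
  exact ⟨u :: l, hl, rfl, by rw [List.getLast?_eq_getLast (List.cons_ne_nil u l), hlast]⟩

theorem IsCycle.exists_injOn_succ {A : V → V → Prop} {p : List V} (hp : IsCycle A p) :
    ∃ f : V → V, Set.InjOn f {v | v ∈ p} ∧ ∀ v ∈ p, A v (f v) := by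
  classical
  obtain ⟨-, hnd, u, hu, hchain⟩ := hp
  obtain ⟨t, rfl⟩ : ∃ t, p = u :: t := ⟨p.tail, List.eq_cons_of_mem_head? hu⟩
  have hlen : (t ++ [u]).length = (u :: t).length := by simp
  have hidx {v : V} (hv : v ∈ u :: t) : (u :: t).idxOf v < (t ++ [u]).length :=
    hlen ▸ List.idxOf_lt_length_iff.mpr hv
  -- the successor of the `i`-th vertex of `u :: t` is the `i`-th vertex of its rotation `t ++ [u]`
  refine ⟨fun v => (t ++ [u]).getD ((u :: t).idxOf v) v, ?_, ?_⟩
  · intro v hv w hw hvw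
    have hrot : (t ++ [u]).Nodup := by simpa using (List.nodup_rotate (n := 1)).mpr hnd
    simp only [List.getD_eq_getElem _ _ (hidx hv), List.getD_eq_getElem _ _ (hidx hw),
      hrot.getElem_inj_iff] at hvw
    exact (List.idxOf_inj hv).mp hvw
  · intro v hv
    have hv' := List.idxOf_lt_length_iff.mpr hv
    have := List.isChain_iff_getElem.mp hchain ((u :: t).idxOf v) (by simpa using hv')
    rw [List.getElem_append_left hv', List.getElem_idxOf hv'] at this
    simpa only [List.cons_append, List.getElem_cons_succ, List.getD_eq_getElem _ _ (hidx hv)]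
      using this

theorem IsCycle.card_le_card_of_forall_arc_mem {A : V → V → Prop} {p : List V}
    (hp : IsCycle A p) {W T : Finset V} (hWp : ∀ w ∈ W, w ∈ p)
    (hWT : ∀ w ∈ W, ∀ v, A w v → v ∈ T) : W.card ≤ T.card := by
  obtain ⟨f, hinj, hf⟩ := hp.exists_injOn_succ
  exact Finset.card_le_card_of_injOn f (fun w hw => hWT w hw _ (hf w (hWp w hw)))
    (hinj.mono hWp)

theorem _root_.List.Nodup.mem_of_card_le_length [Fintype V] {p : List V} (hp : p.Nodup)
    (hlen : Fintype.card V ≤ p.length) (v : V) : v ∈ p := by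
  classical
  have : p.toFinset = Finset.univ := Finset.eq_univ_of_card _ <|
    le_antisymm (Finset.card_le_univ _) (by rwa [List.toFinset_card_of_nodup hp])
  simp [← List.mem_toFinset, this]

/-- The arc relation of `D(a,k)`. -/
def dakArc (R S U W : Finset V) (u v : V) : Prop :=
  (u ∈ R ∧ (v ∈ U ∨ v ∈ W)) ∨ ((u ∈ U ∨ u ∈ W) ∧ v ∈ R) ∨
    (u ∈ U ∧ (v ∈ R ∨ v ∈ S)) ∨ ((u ∈ R ∨ u ∈ S) ∧ v ∈ U) ∨ (u ∈ S ∧ v ∈ W)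

section Dak

variable [DecidableEq V] {R S U W : Finset V} {u v x y : V}

theorem dakArc_of_mem_of_mem (hx : x ∈ R ∪ S) (hy : y ∈ U ∪ W) : dakArc R S U W x y := by
  rw [Finset.mem_union] at hx hy
  unfold dakArc
  tauto

theorem dakArc_of_mem_U (hu : u ∈ U) (hx : x ∈ R ∪ S) : dakArc R S U W u x := by
  rw [Finset.mem_union] at hx
  unfold dakArc
  tauto

theorem dakArc_of_mem_R (hy : y ∈ U ∪ W) (hr : x ∈ R) : dakArc R S U W y x := by
  rw [Finset.mem_union] at hy
  unfold dakArc
  tauto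

theorem mem_R_of_dakArc_of_mem_W (hXY : Disjoint (R ∪ S) (U ∪ W)) (hUW : Disjoint U W)
    (hw : u ∈ W) (h : dakArc R S U W u v) : v ∈ R := by
  have hR : u ∉ R ∪ S := Finset.disjoint_right.mp hXY (Finset.mem_union_right U hw)
  have hU : u ∉ U := Finset.disjoint_right.mp hUW hw
  simp only [Finset.mem_union, not_or] at hR
  unfold dakArc at h
  tauto

theorem mem_U_union_W_of_dakArc_of_mem_S (hXY : Disjoint (R ∪ S) (U ∪ W))
    (hs : u ∈ S) (h : dakArc R S U W u v) : v ∈ U ∪ W := by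
  have hY : u ∉ U ∪ W := Finset.disjoint_left.mp hXY (Finset.mem_union_right R hs)
  simp only [Finset.mem_union, not_or] at hY ⊢
  unfold dakArc at h
  tauto

theorem mem_U_of_dakArc_of_mem_S (hRS : Disjoint R S) (hXY : Disjoint (R ∪ S) (U ∪ W))
    (hs : v ∈ S) (h : dakArc R S U W u v) : u ∈ U := by
  have hY : v ∉ U ∪ W := Finset.disjoint_left.mp hXY (Finset.mem_union_right R hs)
  have hR : v ∉ R := Finset.disjoint_right.mp hRS hs
  simp only [Finset.mem_union, not_or] at hY
  unfold dakArc at h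
  tauto

theorem stronglyConnected_dakArc {r₀ u₀ : V} (hr₀ : r₀ ∈ R) (hu₀ : u₀ ∈ U)
    (hcover : ∀ v : V, v ∈ R ∪ S ∪ U ∪ W) : StronglyConnected (dakArc R S U W) := by
  have hu₀Y : u₀ ∈ U ∪ W := Finset.mem_union_left W hu₀
  have hr₀X : r₀ ∈ R ∪ S := Finset.mem_union_left S hr₀
  refine stronglyConnected_of_hub r₀ (fun v => ?_) (fun v => ?_)
  all_goals
    have hv := hcover v
    rw [Finset.union_assoc, Finset.mem_union] at hv
    rcases hv with hv | hv
  · exact .head (dakArc_of_mem_of_mem hv hu₀Y) (.single (dakArc_of_mem_R hu₀Y hr₀))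
  · exact .single (dakArc_of_mem_R hv hr₀)
  · exact .head (dakArc_of_mem_of_mem hr₀X hu₀Y) (.single (dakArc_of_mem_U hu₀ hv))
  · exact .single (dakArc_of_mem_of_mem hr₀X hv)

variable {a k : ℕ}

theorem le_deg_dakArc [Finite V] (hX : (R ∪ S).card = a) (hY : (U ∪ W).card = a)
    (hR : R.card = k) (hU : U.card = k) (hcover : ∀ v : V, v ∈ R ∪ S ∪ U ∪ W) (v : V) :
    a + k ≤ deg (dakArc R S U W) v := by
  have hv := hcover v
  rw [Finset.union_assoc, Finset.mem_union] at hv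
  unfold deg
  rcases hv with hv | hv
  · have hout : (U ∪ W).card ≤ outdeg (dakArc R S U W) v :=
      card_le_outdeg fun _ hy => dakArc_of_mem_of_mem hv hy
    have hin : U.card ≤ indeg (dakArc R S U W) v :=
      card_le_indeg fun _ hu => dakArc_of_mem_U hu hv
    omega
  · have hout : R.card ≤ outdeg (dakArc R S U W) v :=
      card_le_outdeg fun _ hr => dakArc_of_mem_R hv hr
    have hin : (R ∪ S).card ≤ indeg (dakArc R S U W) v :=
      card_le_indeg fun _ hx => dakArc_of_mem_of_mem hx hv
    omega

theorem deg_dakArc_of_mem_S [Finite V] (hRS : Disjoint R S) (hXY : Disjoint (R ∪ S) (U ∪ W))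
    (hY : (U ∪ W).card = a) (hU : U.card = k) (hs : v ∈ S) :
    deg (dakArc R S U W) v = a + k := by
  have hvX : v ∈ R ∪ S := Finset.mem_union_right R hs
  have hout : outdeg (dakArc R S U W) v = a :=
    hY ▸ le_antisymm (outdeg_le_card fun _ => mem_U_union_W_of_dakArc_of_mem_S hXY hs)
      (card_le_outdeg fun _ hy => dakArc_of_mem_of_mem hvX hy)
  have hin : indeg (dakArc R S U W) v = k :=
    hU ▸ le_antisymm (indeg_le_card fun _ => mem_U_of_dakArc_of_mem_S hRS hXY hs)
      (card_le_indeg fun _ hu => dakArc_of_mem_U hu hvX)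
  rw [deg, hout, hin]

theorem not_hasCycleOfLength_dakArc [Fintype V] (hk : 2 * k < a) (hR : R.card = k)
    (hS : S.card = a - k) (hU : U.card = k) (hW : W.card = a - k)
    (hUW : Disjoint U W) (hXY : Disjoint (R ∪ S) (U ∪ W))
    (hcover : ∀ v : V, v ∈ R ∪ S ∪ U ∪ W) :
    ¬ HasCycleOfLength (dakArc R S U W) (2 * a) := by
  rintro ⟨p, hp, hlen⟩
  have hcard : Fintype.card V ≤ 2 * a := by
    calc Fintype.card V ≤ (R ∪ S ∪ U ∪ W).card := Finset.card_le_card fun v _ => hcover v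
      _ ≤ R.card + S.card + U.card + W.card := by
        grw [Finset.card_union_le, Finset.card_union_le, Finset.card_union_le]
      _ = 2 * a := by omega
  have := hp.card_le_card_of_forall_arc_mem (W := W) (T := R)
    (fun w _ => hp.2.1.mem_of_card_le_length (hlen ▸ hcard) w)
    (fun _ hw _ => mem_R_of_dakArc_of_mem_W hXY hUW hw)
  omega

end Dak

theorem stmt11_general (a k : ℕ) (hk1 : 1 ≤ k) (hk2 : 2 * k < a)
    {V : Type} [Fintype V] [DecidableEq V]
    (R S U W : Finset V)
    (hR : R.card = k) (hS : S.card = a - k) (hU : U.card = k) (hW : W.card = a - k)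
    (hRS : Disjoint R S) (hUW : Disjoint U W) (hXY : Disjoint (R ∪ S) (U ∪ W))
    (hcover : ∀ v : V, v ∈ R ∪ S ∪ U ∪ W)
    (A : V → V → Prop)
    (hA : ∀ u v : V, A u v ↔
      (u ∈ R ∧ (v ∈ U ∨ v ∈ W)) ∨ ((u ∈ U ∨ u ∈ W) ∧ v ∈ R) ∨
      (u ∈ U ∧ (v ∈ R ∨ v ∈ S)) ∨ ((u ∈ R ∨ u ∈ S) ∧ v ∈ U) ∨
      (u ∈ S ∧ v ∈ W)) :
    StronglyConnected A ∧ (∀ v : V, a + k ≤ deg A v) ∧ (∃ v : V, deg A v = a + k) ∧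
      ¬ HasCycleOfLength A (2 * a) := by
  obtain rfl : A = dakArc R S U W := funext₂ fun u v => propext (hA u v)
  have hX : (R ∪ S).card = a := by rw [Finset.card_union_of_disjoint hRS, hR, hS]; omega
  have hY : (U ∪ W).card = a := by rw [Finset.card_union_of_disjoint hUW, hU, hW]; omega
  obtain ⟨r, hr⟩ : R.Nonempty := Finset.card_pos.mp (by omega)
  obtain ⟨u, hu⟩ : U.Nonempty := Finset.card_pos.mp (by omega)
  obtain ⟨s, hs⟩ : S.Nonempty := Finset.card_pos.mp (by omega)
  exact ⟨stronglyConnected_dakArc hr hu hcover, le_deg_dakArc hX hY hR hU hcover,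
    ⟨s, deg_dakArc_of_mem_S hRS hXY hY hU hs⟩,
    not_hasCycleOfLength_dakArc hk2 hR hS hU hW hUW hXY hcover⟩

/-- for `a ≥ 2` and `1 ≤ k < a/2`, the digraph `D(a,k)` with classes
`X = R ∪ S`, `Y = U ∪ W` (`|R| = |U| = k`, `|S| = |W| = a - k`) and arcs `ry`, `yr`
(`r ∈ R`, `y ∈ Y`), `ux`, `xu` (`u ∈ U`, `x ∈ X`) and `sw` (`s ∈ S`, `w ∈ W`) is strongly
connected, has minimum degree `a + k`, and contains no hamiltonian cycle. -/
theorem stmt11 (a k : ℕ) (ha : 2 ≤ a) (hk1 : 1 ≤ k) (hk2 : 2 * k < a)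
    {V : Type} [Fintype V] [DecidableEq V]
    (R S U W : Finset V)
    (hR : R.card = k) (hS : S.card = a - k) (hU : U.card = k) (hW : W.card = a - k)
    (hRS : Disjoint R S) (hUW : Disjoint U W) (hXY : Disjoint (R ∪ S) (U ∪ W))
    (hcover : ∀ v : V, v ∈ R ∪ S ∪ U ∪ W)
    (A : V → V → Prop)
    (hA : ∀ u v : V, A u v ↔
      (u ∈ R ∧ (v ∈ U ∨ v ∈ W)) ∨ ((u ∈ U ∨ u ∈ W) ∧ v ∈ R) ∨
      (u ∈ U ∧ (v ∈ R ∨ v ∈ S)) ∨ ((u ∈ R ∨ u ∈ S) ∧ v ∈ U) ∨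
      (u ∈ S ∧ v ∈ W)) :
    StronglyConnected A ∧ (∀ v : V, a + k ≤ deg A v) ∧ (∃ v : V, deg A v = a + k) ∧
      ¬ HasCycleOfLength A (2 * a) :=
  stmt11_general a k hk1 hk2 R S U W hR hS hU hW hRS hUW hXY hcover A hA

end BipDigraph
end

section
/- Let D' be a balanced bipartite digraph with colour classes X', Y' of cardinality a' ≥ 2 possessing a complete matching M' from X' to Y', satisfying condition (A). Then D' contains a vertex x ∈ X' with in-degree at least 2 or a vertex y ∈ Y' with out-degree at least 2; consequently D' contains an M'-compatible path of order at least 4. -/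
namespace BipDigraph

variable {V : Type}

/-!
If no vertex of `X` had in-degree at least 2 and no vertex of `Y` out-degree at least 2, every
degree would be at most `a + 1`, and two matching arcs (compatible paths of length 1) would have
degree sum at most `4a + 4 < 6a + 2`, against condition (A). Since `|X| = |Y|`, `M` maps `X` onto
`Y`, so a second in-neighbour of `x ∈ X`, or a second out-neighbour `x` of some `y ∈ Y`, has the
form `M x₀ → x` with `x₀ ≠ x`; then `x₀, M x₀, x, M x` is a compatible path of order 4.
-/

theorem exists_ne_of_two_le_natCard {α : Type*} {p : α → Prop}
    (h : 2 ≤ Nat.card {x // p x}) (z : α) : ∃ x, p x ∧ x ≠ z := by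
  have : Finite {x // p x} := Nat.finite_of_card_ne_zero (by omega)
  have : Nontrivial {x // p x} := Finite.one_lt_card_iff_nontrivial.1 h
  obtain ⟨⟨x, hx⟩, ⟨y, hy⟩, hxy⟩ := exists_pair_ne {x // p x}
  by_cases hxz : x = z
  · exact ⟨y, hy, fun hyz => hxy (Subtype.ext (hxz.trans hyz.symm))⟩
  · exact ⟨x, hx, hxz⟩

theorem natCard_subtype_le_card {α : Type*} {p : α → Prop} (s : Finset α)
    (h : ∀ x, p x → x ∈ s) : Nat.card {x // p x} ≤ s.card :=
  calc Nat.card {x // p x}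
      ≤ Nat.card s :=
        Nat.card_le_card_of_injective (fun x => ⟨x.1, h x.1 x.2⟩)
          fun _ _ hxy => Subtype.ext (congrArg Subtype.val hxy :)
    _ = s.card := Nat.card_eq_finsetCard s

section

variable {A : V → V → Prop} {X Y : Finset V} {a : ℕ} {M : V → V}

namespace BalancedBipartite

theorem ne_of_mem_of_mem (h : BalancedBipartite A X Y a) {x y : V} (hx : x ∈ X) (hy : y ∈ Y) :
    x ≠ y :=
  fun hxy => Finset.disjoint_left.1 h.2.2.1 hx (hxy ▸ hy)

theorem mem_left_iff_mem_right_of_adj (h : BalancedBipartite A X Y a) {u v : V} (huv : A u v) :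
    u ∈ X ↔ v ∈ Y := by
  rcases h.2.2.2.2 u v huv with ⟨hu, hv⟩ | ⟨hu, hv⟩
  · exact iff_of_true hu hv
  · exact iff_of_false (fun hu' => h.ne_of_mem_of_mem hu' hu rfl)
      (fun hv' => h.ne_of_mem_of_mem hv hv' rfl)

theorem mem_right_of_adj_of_mem_left (h : BalancedBipartite A X Y a) {u v : V} (huv : A u v)
    (hv : v ∈ X) : u ∈ Y :=
  (h.2.2.2.1 u).resolve_left fun hu =>
    h.ne_of_mem_of_mem hv ((h.mem_left_iff_mem_right_of_adj huv).1 hu) rfl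

theorem mem_left_of_adj_of_mem_right (h : BalancedBipartite A X Y a) {u v : V} (huv : A u v)
    (hu : u ∈ Y) : v ∈ X :=
  (h.2.2.2.1 v).resolve_right fun hv =>
    h.ne_of_mem_of_mem ((h.mem_left_iff_mem_right_of_adj huv).2 hv) hu rfl

theorem outdeg_le (h : BalancedBipartite A X Y a) {x : V} (hx : x ∈ X) : outdeg A x ≤ a :=
  h.2.1 ▸ natCard_subtype_le_card Y fun _ hw => (h.mem_left_iff_mem_right_of_adj hw).1 hx

theorem indeg_le (h : BalancedBipartite A X Y a) {y : V} (hy : y ∈ Y) : indeg A y ≤ a :=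
  h.1 ▸ natCard_subtype_le_card X fun _ hw => (h.mem_left_iff_mem_right_of_adj hw).2 hy

end BalancedBipartite

theorem CompleteMatching.surjOn (h : CompleteMatching A X Y M) (hcard : Y.card ≤ X.card) :
    Set.SurjOn M X Y :=
  Finset.surjOn_of_injOn_of_card_le M (fun x hx => (h.1 x hx).1) h.2 hcard

theorem isCompatPathFromTo_matchingArc {x : V} (hx : x ∈ X) (hne : x ≠ M x) (hadj : A x (M x)) :
    IsCompatPathFromTo A X M [x, M x] x (M x) :=
  ⟨⟨List.cons_ne_nil _ _, by simp [hne], List.isChain_pair.2 hadj, .inl ⟨⟨hx, rfl⟩, trivial⟩⟩,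
    rfl, rfl⟩

theorem BalancedBipartite.isCompatPath_matchingArc_append (hbb : BalancedBipartite A X Y a)
    (hmatch : CompleteMatching A X Y M) {x₀ x : V} (hx₀ : x₀ ∈ X) (hx : x ∈ X) (hne : x₀ ≠ x)
    (hadj : A (M x₀) x) : IsCompatPath A X M [x₀, M x₀, x, M x] := by
  have hMx₀ := hmatch.1 x₀ hx₀
  have hMx := hmatch.1 x hx
  have hMne : M x₀ ≠ M x := fun h => hne (hmatch.2 hx₀ hx h)
  refine ⟨List.cons_ne_nil _ _, ?_, ?_, .inl ⟨⟨hx₀, rfl⟩, ⟨hadj, fun h => ?_⟩, ⟨hx, rfl⟩, trivial⟩⟩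
  · simp only [List.nodup_cons, List.mem_cons, List.not_mem_nil, or_false, not_or, not_false_eq_true,
      List.nodup_nil, and_true]
    exact ⟨⟨hbb.ne_of_mem_of_mem hx₀ hMx₀.1, hne, hbb.ne_of_mem_of_mem hx₀ hMx.1⟩,
      ⟨(hbb.ne_of_mem_of_mem hx hMx₀.1).symm, hMne⟩, hbb.ne_of_mem_of_mem hx hMx.1⟩
  · simp only [List.Chain', List.isChain_cons_cons, List.isChain_singleton, and_true]
    exact ⟨hMx₀.2, hadj, hMx.2⟩
  · exact hbb.ne_of_mem_of_mem h.1 hMx₀.1 rfl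

theorem exists_two_le_indeg_or_two_le_outdeg (ha : 2 ≤ a) (hbb : BalancedBipartite A X Y a)
    (hmatch : CompleteMatching A X Y M) (hA : CondA A X Y M a) :
    (∃ x ∈ X, 2 ≤ indeg A x) ∨ (∃ y ∈ Y, 2 ≤ outdeg A y) := by
  by_contra! ⟨hin, hout⟩
  have hdegX : ∀ x ∈ X, deg A x ≤ a + 1 := fun x hx => by
    have := hbb.outdeg_le hx; have := hin x hx; unfold deg; omega
  have hdegY : ∀ y ∈ Y, deg A y ≤ a + 1 := fun y hy => by
    have := hbb.indeg_le hy; have := hout y hy; unfold deg; omega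
  obtain ⟨x₁, hx₁, x₂, hx₂, hne⟩ := Finset.one_lt_card.1 (hbb.1 ▸ ha : 1 < X.card)
  have hpath : ∀ x ∈ X, IsCompatPathFromTo A X M [x, M x] x (M x) := fun x hx =>
    isCompatPathFromTo_matchingArc hx (hbb.ne_of_mem_of_mem hx (hmatch.1 x hx).1) (hmatch.1 x hx).2
  have hsum := hA x₁ x₂ (M x₁) (M x₂) hx₁ hx₂ (hmatch.1 x₁ hx₁).1 (hmatch.1 x₂ hx₂).1 hne
    (fun h => hne (hmatch.2 hx₁ hx₂ h)) ⟨_, hpath x₁ hx₁⟩ ⟨_, hpath x₂ hx₂⟩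
  have := hdegX x₁ hx₁; have := hdegX x₂ hx₂
  have := hdegY _ (hmatch.1 x₁ hx₁).1; have := hdegY _ (hmatch.1 x₂ hx₂).1
  omega

theorem exists_adj_matched_of_two_le_indeg_or_outdeg (hbb : BalancedBipartite A X Y a)
    (hmatch : CompleteMatching A X Y M)
    (h : (∃ x ∈ X, 2 ≤ indeg A x) ∨ (∃ y ∈ Y, 2 ≤ outdeg A y)) :
    ∃ x₀ ∈ X, ∃ x ∈ X, x₀ ≠ x ∧ A (M x₀) x := by
  have hsurj := hmatch.surjOn (hbb.2.1.trans hbb.1.symm).le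
  rcases h with ⟨x, hx, hin⟩ | ⟨y, hy, hout⟩
  · obtain ⟨u, hux, hu⟩ := exists_ne_of_two_le_natCard hin (M x)
    obtain ⟨x₀, hx₀, rfl⟩ := hsurj (hbb.mem_right_of_adj_of_mem_left hux hx)
    exact ⟨x₀, hx₀, x, hx, fun h => hu (h ▸ rfl), hux⟩
  · obtain ⟨x₀, hx₀, rfl⟩ := hsurj hy
    obtain ⟨v, hv, hne⟩ := exists_ne_of_two_le_natCard hout x₀
    exact ⟨x₀, hx₀, v, hbb.mem_left_of_adj_of_mem_right hv hy, hne.symm, hv⟩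

end

theorem stmt15_general {V : Type} (A : V → V → Prop)
    (X Y : Finset V) (a : ℕ) (ha : 2 ≤ a)
    (hbb : BalancedBipartite A X Y a)
    (M : V → V) (hmatch : CompleteMatching A X Y M)
    (hA : CondA A X Y M a) :
    ((∃ x ∈ X, 2 ≤ indeg A x) ∨ (∃ y ∈ Y, 2 ≤ outdeg A y)) ∧
      ∃ p : List V, IsCompatPath A X M p ∧ 4 ≤ p.length := by
  have hdeg := exists_two_le_indeg_or_two_le_outdeg ha hbb hmatch hA
  obtain ⟨x₀, hx₀, x, hx, hne, hadj⟩ :=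
    exists_adj_matched_of_two_le_indeg_or_outdeg hbb hmatch hdeg
  exact ⟨hdeg, _, hbb.isCompatPath_matchingArc_append hmatch hx₀ hx hne hadj, le_rfl⟩

/-- a balanced bipartite digraph with classes of cardinality `a' ≥ 2`,
possessing a complete matching `M'` from `X'` to `Y'` and satisfying condition (A),
contains a vertex of `X'` of in-degree at least 2 or a vertex of `Y'` of out-degree at
least 2; consequently it contains an `M'`-compatible path of order at least 4. -/
theorem stmt15 {V : Type} [Fintype V] [DecidableEq V] (A : V → V → Prop)
    (X Y : Finset V) (a : ℕ) (ha : 2 ≤ a)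
    (hbb : BalancedBipartite A X Y a)
    (M : V → V) (hmatch : CompleteMatching A X Y M)
    (hA : CondA A X Y M a) :
    ((∃ x ∈ X, 2 ≤ indeg A x) ∨ (∃ y ∈ Y, 2 ≤ outdeg A y)) ∧
      ∃ p : List V, IsCompatPath A X M p ∧ 4 ≤ p.length :=
  stmt15_general A X Y a ha hbb M hmatch hA

end BipDigraph
end
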